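/- For every R > 0, the Assouad dimension of the space ℰℋ_{[0,R]}^{<ω} of isometry classes of nonempty finite subsets of [0,R], endowed with the Euclidean–Hausdorff distance, is infinite: for every α > 0 and every C > 0 there exist r > 0, β ∈ (0,1], and a nonempty finite subset A ⊆ [0,R] such that the open d_EH-ball of radius r centred at A cannot be covered by fewer than C·β^{−α} open d_EH-balls of radius at most β·r. -/

import Mathlib

/-!
Put `ε = R / m`. For each `X ⊆ {2, …, m - 2}` the set `ε • ({0, 1, m} ∪ X)` lies in `[0, R]`,
so all `2 ^ (m - 3)` of them lie in one `d_EH`-ball of radius `2R`. The isometries of `ℝ` are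
`x ↦ a ± x`; if one of them brings two such sets within Hausdorff distance `ε / 2`, then, both
being on the lattice `εℤ`, rounding `a / ε` shows that the integer patterns are exactly
congruent, and the markers `0, 1, m` force `X = Y`. Hence a ball of radius `ε / 4` contains at
most one of the sets. With `r = 2R` and `β = 1 / (8m)` this gives `k ≥ 2 ^ (m - 3)`, which beats
`C β ^ (-α) = C (8m) ^ α` for large `m`.
-/

open Metric

noncomputable def dEH (A B : Set ℝ) : ℝ :=
  sInf {d : ℝ | ∃ f : ℝ → ℝ, Isometry f ∧ Function.Surjective f ∧
    d = hausdorffDist A (f '' B)}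

open Set Bornology

theorem dEH_le_hausdorffDist (A B : Set ℝ) : dEH A B ≤ hausdorffDist A B :=
  csInf_le ⟨0, by rintro d ⟨f, -, -, rfl⟩; exact hausdorffDist_nonneg⟩
    ⟨id, isometry_id, Function.surjective_id, by simp⟩

theorem exists_isometryEquiv_hausdorffDist_lt_of_dEH_lt {A B : Set ℝ} {ρ : ℝ}
    (h : dEH A B < ρ) : ∃ f : ℝ ≃ᵢ ℝ, hausdorffDist A (f '' B) < ρ := by
  obtain ⟨d, ⟨f, hf, hs, rfl⟩, hd⟩ :=
    exists_lt_of_csInf_lt (by exact ⟨_, id, isometry_id, Function.surjective_id, rfl⟩) h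
  exact ⟨⟨Equiv.ofBijective f ⟨hf.injective, hs⟩, hf⟩, hd⟩

theorem dEH_le_of_subset_Icc {A B : Set ℝ} {a b : ℝ} (hA : A ⊆ Icc a b) (hB : B ⊆ Icc a b)
    (hAne : A.Nonempty) (hBne : B.Nonempty) : dEH A B ≤ b - a := by
  obtain ⟨x, hx⟩ := hAne
  calc dEH A B ≤ hausdorffDist A B := dEH_le_hausdorffDist A B
    _ ≤ diam (A ∪ B) := hausdorffDist_le_diam ⟨x, hx⟩ (isBounded_Icc a b |>.subset hA) hBne
        (isBounded_Icc a b |>.subset hB)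
    _ ≤ diam (Icc a b) := diam_mono (union_subset hA hB) (isBounded_Icc a b)
    _ = b - a := Real.diam_Icc ((hA hx).1.trans (hA hx).2)

theorem exists_isometryEquiv_hausdorffDist_lt_two_mul_of_dEH_lt {A S T : Set ℝ}
    (hA : IsBounded A) (hAne : A.Nonempty) (hS : IsBounded S) (hSne : S.Nonempty) {ρ : ℝ}
    (hAS : dEH A S < ρ) (hAT : dEH A T < ρ) :
    ∃ g : ℝ ≃ᵢ ℝ, hausdorffDist S (g '' T) < 2 * ρ := by
  obtain ⟨f, hf⟩ := exists_isometryEquiv_hausdorffDist_lt_of_dEH_lt hAS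
  obtain ⟨f', hf'⟩ := exists_isometryEquiv_hausdorffDist_lt_of_dEH_lt hAT
  refine ⟨f'.trans f.symm, ?_⟩
  have hfin : hausdorffEDist (f '' S) A ≠ ⊤ :=
    hausdorffEDist_ne_top_of_nonempty_of_bounded (hSne.image f) hAne
      (f.isometry.lipschitz.isBounded_image hS) hA
  calc hausdorffDist S (f'.trans f.symm '' T) = hausdorffDist (f '' S) (f' '' T) := by
        rw [← hausdorffDist_image f.isometry, ← image_comp]
        congr 2
        funext x
        simp
    _ ≤ hausdorffDist (f '' S) A + hausdorffDist A (f' '' T) := hausdorffDist_triangle hfin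
    _ < ρ + ρ := add_lt_add (by rwa [hausdorffDist_comm]) hf'
    _ = 2 * ρ := (two_mul ρ).symm

theorem Isometry.exists_eq_add_units_mul {f : ℝ → ℝ} (hf : Isometry f) :
    ∃ (a : ℝ) (u : ℤˣ), ∀ x, f x = a + (u : ℤ) * x := by
  have hsq : ∀ x y, (f x - f y) ^ 2 = (x - y) ^ 2 := fun x y => by
    rw [← sq_abs, ← Real.dist_eq, hf.dist_eq, Real.dist_eq, sq_abs]
  have he : (f 1 - f 0) ^ 2 = 1 := by simpa using hsq 1 0
  have hlin : ∀ x, f x = f 0 + (f 1 - f 0) * x := fun x => by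
    have hx := hsq x 0
    have hx1 := hsq x 1
    have hue : (f x - f 0) * (f 1 - f 0) = x := by nlinarith
    linear_combination (f 1 - f 0) * hue - (f x - f 0) * he
  rcases sq_eq_one_iff.1 he with h | h
  · exact ⟨f 0, 1, fun x => by rw [hlin x, h]; simp⟩
  · exact ⟨f 0, -1, fun x => by rw [hlin x, h]; simp⟩

def gridSet (ε : ℝ) (S : Set ℤ) : Set ℝ := (fun n : ℤ => ε * n) '' S

theorem gridSet_subset_Icc {ε : ℝ} (hε : 0 ≤ ε) {S : Set ℤ} {m : ℤ} (hS : S ⊆ Icc 0 m) :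
    gridSet ε S ⊆ Icc 0 (ε * m) := by
  rintro _ ⟨n, hn, rfl⟩
  obtain ⟨h0, hm⟩ := hS hn
  exact ⟨mul_nonneg hε (by exact_mod_cast h0),
    mul_le_mul_of_nonneg_left (by exact_mod_cast hm) hε⟩

theorem round_eq_of_abs_sub_lt_half {x : ℝ} {n : ℤ} (h : |x - n| < 1 / 2) : round x = n :=
  round_eq_iff.2 ⟨by linarith [abs_lt.1 h], by linarith [abs_lt.1 h]⟩

theorem exists_eq_image_of_hausdorffDist_gridSet_lt {ε : ℝ} (hε : 0 < ε) {S T : Set ℤ}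
    (hS : S.Finite) (hSne : S.Nonempty) (hT : T.Finite) (hTne : T.Nonempty) {g : ℝ → ℝ}
    (hg : Isometry g) (h : hausdorffDist (gridSet ε S) (g '' gridSet ε T) < ε / 2) :
    ∃ (n : ℤ) (u : ℤˣ), S = (fun t => n + u * t) '' T := by
  obtain ⟨a, u, hga⟩ := hg.exists_eq_add_units_mul
  have hfin : hausdorffEDist (gridSet ε S) (g '' gridSet ε T) ≠ ⊤ :=
    hausdorffEDist_ne_top_of_nonempty_of_bounded (hSne.image _) ((hTne.image _).image g)
      (hS.image _).isBounded ((hT.image _).image g).isBounded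
  -- `s - u t` is an integer within `1/2` of `a / ε`, so it can only be `round (a / ε)`.
  have hround : ∀ s t : ℤ, dist (ε * s) (g (ε * t)) < ε / 2 → s = round (a / ε) + u * t := by
    intro s t hst
    have : |a / ε - ((s - u * t : ℤ) : ℝ)| < 1 / 2 := by
      rw [Real.dist_eq, hga] at hst
      rw [show a / ε - ((s - u * t : ℤ) : ℝ) = -(ε * s - (a + u * (ε * t))) / ε by
        field_simp; push_cast; ring, abs_div, abs_neg, abs_of_pos hε, div_lt_iff₀ hε]
      linarith
    rw [round_eq_of_abs_sub_lt_half this]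
    ring
  refine ⟨round (a / ε), u, Subset.antisymm ?_ ?_⟩
  · intro s hs
    obtain ⟨_, ⟨_, ⟨t, ht, rfl⟩, rfl⟩, hd⟩ :=
      exists_dist_lt_of_hausdorffDist_lt (mem_image_of_mem _ hs) h hfin
    exact ⟨t, ht, (hround s t hd).symm⟩
  · rintro _ ⟨t, ht, rfl⟩
    obtain ⟨_, ⟨s, hs, rfl⟩, hd⟩ :=
      exists_dist_lt_of_hausdorffDist_lt' (mem_image_of_mem g (mem_image_of_mem _ ht)) h hfin
    simpa only [← hround s t hd] using hs

def markedSet (m : ℤ) (X : Set ℤ) : Set ℤ := insert 0 (insert 1 (insert m X))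

section markedSet

variable {m : ℤ} {X Y : Set ℤ}

theorem zero_mem_markedSet : 0 ∈ markedSet m X := mem_insert _ _

theorem one_mem_markedSet : 1 ∈ markedSet m X := by simp [markedSet]

theorem self_mem_markedSet : m ∈ markedSet m X := by simp [markedSet]

theorem markedSet_nonempty : (markedSet m X).Nonempty := ⟨0, zero_mem_markedSet⟩

theorem markedSet_finite (hX : X.Finite) : (markedSet m X).Finite :=
  ((hX.insert _).insert _).insert _

theorem markedSet_subset_Icc (hm : 1 ≤ m) (hX : X ⊆ Icc 0 m) : markedSet m X ⊆ Icc 0 m := by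
  simp only [markedSet, insert_subset_iff, mem_Icc]
  exact ⟨⟨le_rfl, by omega⟩, ⟨zero_le_one, hm⟩, ⟨by omega, le_rfl⟩, hX⟩

theorem markedSet_inter_Icc (hX : X ⊆ Icc 2 (m - 2)) : markedSet m X ∩ Icc 2 (m - 2) = X := by
  ext z
  simp only [markedSet, mem_inter_iff, mem_insert_iff, mem_Icc]
  constructor
  · rintro ⟨rfl | rfl | rfl | hz, hz'⟩ <;> first | exact hz | omega
  · exact fun hz => ⟨Or.inr (Or.inr (Or.inr hz)), hX hz⟩

/-- The markers `0, 1, m` pin the map down: a translation must fix `0`, and a reflection must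
swap `0` and `m`, hence send `1` to `m - 1`, which is never in a marked set. -/
theorem eq_of_markedSet_eq_image (hm : 3 ≤ m) (hX : X ⊆ Icc 2 (m - 2)) (hY : Y ⊆ Icc 2 (m - 2))
    {n : ℤ} {u : ℤˣ} (h : markedSet m X = (fun t => n + u * t) '' markedSet m Y) : X = Y := by
  have hIcc : ∀ {Z : Set ℤ}, Z ⊆ Icc 2 (m - 2) → markedSet m Z ⊆ Icc 0 m := fun hZ =>
    markedSet_subset_Icc (by omega) (hZ.trans (Icc_subset_Icc (by omega) (by omega)))
  have hn : n + u * 0 ∈ markedSet m X := h ▸ mem_image_of_mem _ zero_mem_markedSet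
  have hpre : ∀ s ∈ markedSet m X, ∃ t ∈ markedSet m Y, n + u * t = s := fun s hs => by
    rwa [h] at hs
  rcases Int.units_eq_one_or u with rfl | rfl
  · obtain ⟨t, ht, hts⟩ := hpre 0 zero_mem_markedSet
    have hn0 : n = 0 := by
      have ht0 := hIcc hY ht
      have hnX := hIcc hX hn
      simp only [mem_Icc, Units.val_one, one_mul, mul_zero] at *
      omega
    rw [← markedSet_inter_Icc hX, ← markedSet_inter_Icc hY, h, hn0]
    simp
  · obtain ⟨t, ht, hts⟩ := hpre m self_mem_markedSet
    obtain ⟨t', ht', hts'⟩ := hpre 1 one_mem_markedSet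
    have ht0 := hIcc hY ht
    have hnm := hIcc hX hn
    simp only [markedSet, mem_Icc, mem_insert_iff, Units.val_neg, Units.val_one, neg_mul,
      one_mul, mul_zero] at *
    rcases ht' with rfl | rfl | rfl | ht'
    all_goals first | omega | have := hY ht'; simp only [mem_Icc] at this; omega

end markedSet

theorem gridSet_markedSet_subset_Icc {R : ℝ} (hR : 0 ≤ R) {m : ℕ} (hm : 3 ≤ m) {X : Set ℤ}
    (hX : X ⊆ Icc 2 (m - 2)) : gridSet (R / m) (markedSet m X) ⊆ Icc 0 R := by
  refine (gridSet_subset_Icc (by positivity) (markedSet_subset_Icc (by omega)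
    (hX.trans (Icc_subset_Icc (by omega) (by omega))))).trans_eq ?_
  rw [Int.cast_natCast, div_mul_cancel₀ R (by positivity)]

open Asymptotics Filter in
theorem exists_three_le_mul_rpow_le_two_pow (C α : ℝ) :
    ∃ m : ℕ, 3 ≤ m ∧ C * (8 * m) ^ α ≤ 2 ^ (m - 3) := by
  have hlo : (fun n : ℕ => 8 * C * 8 ^ α * (n : ℝ) ^ α) =o[atTop] (fun n : ℕ => (2 : ℝ) ^ n) := by
    refine (((isLittleO_rpow_exp_pos_mul_atTop α (Real.log_pos one_lt_two)).comp_tendsto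
      tendsto_natCast_atTop_atTop).const_mul_left _).congr_right fun n => ?_
    simp [← Real.rpow_def_of_pos two_pos]
  obtain ⟨m, hm, hm3⟩ := ((hlo.bound one_pos).and (eventually_ge_atTop 3)).exists
  refine ⟨m, hm3, ?_⟩
  have h8 : (2 : ℝ) ^ m = 8 * 2 ^ (m - 3) := by
    rw [← pow_sub_mul_pow 2 hm3]
    norm_num [mul_comm]
  rw [Real.mul_rpow (by norm_num) (Nat.cast_nonneg m)]
  simp only [one_mul, Real.norm_eq_abs, abs_pow, abs_two] at hm
  linarith [le_abs_self (8 * C * 8 ^ α * (m : ℝ) ^ α)]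

theorem two_pow_le_card_of_forall_exists_dEH_lt {ι : Type*} [Fintype ι] {m : ℕ} (hm : 3 ≤ m)
    {ε : ℝ} (hε : 0 < ε) (c : ι → Set ℝ) (hc : ∀ i, IsBounded (c i) ∧ (c i).Nonempty)
    (ρ : ι → ℝ) (hρ : ∀ i, ρ i ≤ ε / 4)
    (hcov : ∀ X : Finset ℤ, ↑X ⊆ Icc (2 : ℤ) (m - 2) →
      ∃ i, dEH (c i) (gridSet ε (markedSet m X)) < ρ i) :
    2 ^ (m - 3) ≤ Fintype.card ι := by
  have hsub : ∀ X ∈ (Finset.Icc (2 : ℤ) (m - 2)).powerset, (X : Set ℤ) ⊆ Icc 2 (m - 2) :=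
    fun X hX => (Finset.coe_subset.2 (Finset.mem_powerset.1 hX)).trans_eq (Finset.coe_Icc _ _)
  have hcard := Finset.card_le_card_of_forall_subsingleton
    (fun (X : Finset ℤ) i => dEH (c i) (gridSet ε (markedSet m X)) < ρ i)
    (s := (Finset.Icc (2 : ℤ) (m - 2)).powerset) (t := Finset.univ)
    (fun X hX => by
      obtain ⟨i, hi⟩ := hcov X (hsub X hX)
      exact ⟨i, Finset.mem_univ i, hi⟩)
    (fun i _ X ⟨hX, hXi⟩ Y ⟨hY, hYi⟩ => by
      have hfin : ∀ Z : Finset ℤ, (markedSet m Z).Finite := fun Z =>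
        markedSet_finite Z.finite_toSet
      obtain ⟨g, hg⟩ := exists_isometryEquiv_hausdorffDist_lt_two_mul_of_dEH_lt (hc i).1 (hc i).2
        ((hfin X).image _).isBounded (markedSet_nonempty.image _) hXi hYi
      obtain ⟨n, u, hnu⟩ := exists_eq_image_of_hausdorffDist_gridSet_lt hε (hfin X)
        markedSet_nonempty (hfin Y) markedSet_nonempty g.isometry
        (hg.trans_le (by linarith [hρ i]))
      exact Finset.coe_inj.1 (eq_of_markedSet_eq_image (by omega) (hsub X hX) (hsub Y hY) hnu))
  rwa [Finset.card_powerset, Int.card_Icc, Finset.card_univ,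
    show ((m : ℤ) - 2 + 1 - 2).toNat = m - 3 by omega] at hcard

/-- The Assouad dimension of `ℰℋ_{[0,R]}^{<ω}` (nonempty finite subsets of `[0,R]` with the
Euclidean–Hausdorff distance) is infinite: for every `α > 0` and `C > 0` there are `r > 0`,
`β ∈ (0,1]`, and a nonempty finite `A ⊆ [0,R]`, such that any covering of the open
`d_EH`-ball of radius `r` centred at `A` by open `d_EH`-balls of radii at most `β r` uses
at least `C β^{-α}` balls. -/
theorem assouad_dim_EH_bounded_infinite (R : ℝ) (hR : 0 < R) :
    ∀ α : ℝ, 0 < α → ∀ C : ℝ, 0 < C →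
      ∃ r : ℝ, 0 < r ∧ ∃ β : ℝ, β ∈ Set.Ioc (0 : ℝ) 1 ∧
        ∃ A : {A : Set ℝ // A.Finite ∧ A.Nonempty ∧ A ⊆ Set.Icc 0 R},
          ∀ (k : ℕ) (c : Fin k → {A : Set ℝ // A.Finite ∧ A.Nonempty ∧ A ⊆ Set.Icc 0 R})
            (ρ : Fin k → ℝ), (∀ i, ρ i ≤ β * r) →
            ({B : {A : Set ℝ // A.Finite ∧ A.Nonempty ∧ A ⊆ Set.Icc 0 R} |
                dEH A.val B.val < r} ⊆
              ⋃ i : Fin k, {B : {A : Set ℝ // A.Finite ∧ A.Nonempty ∧ A ⊆ Set.Icc 0 R} |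
                dEH (c i).val B.val < ρ i}) →
            C * β ^ (-α) ≤ (k : ℝ) := by
  intro α _ C _
  obtain ⟨m, hm3, hmC⟩ := exists_three_le_mul_rpow_le_two_pow C α
  have hm : (3 : ℝ) ≤ m := by exact_mod_cast hm3
  have h0R : ({0} : Set ℝ) ⊆ Icc 0 R := by simp [hR.le]
  refine ⟨2 * R, by positivity, 1 / (8 * m), ⟨by positivity, ?_⟩,
    ⟨{0}, finite_singleton 0, singleton_nonempty 0, h0R⟩, fun k c ρ hρ hcov => ?_⟩
  · rw [div_le_one (by positivity)]
    linarith
  have hk : 2 ^ (m - 3) ≤ k := by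
    refine (Fintype.card_fin k).subst (two_pow_le_card_of_forall_exists_dEH_lt hm3
      (ε := R / m) (by positivity) (fun i => (c i).val)
      (fun i => ⟨(c i).2.1.isBounded, (c i).2.2.1⟩) ρ
      (fun i => (hρ i).trans_eq (by field_simp; ring)) fun X hX => ?_)
    have hB := gridSet_markedSet_subset_Icc hR.le hm3 hX
    have hdist : dEH {0} (gridSet (R / m) (markedSet m X)) < 2 * R := by
      linarith [dEH_le_of_subset_Icc h0R hB (singleton_nonempty 0) (markedSet_nonempty.image _)]
    exact mem_iUnion.1 (hcov (a := ⟨_, (markedSet_finite X.finite_toSet).image _,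
      markedSet_nonempty.image _, hB⟩) hdist)
  calc C * (1 / (8 * m)) ^ (-α) = C * (8 * m) ^ α := by
        rw [one_div, Real.inv_rpow (by positivity), ← Real.rpow_neg (by positivity), neg_neg]
    _ ≤ 2 ^ (m - 3) := hmC
    _ ≤ k := by exact_mod_cast hk
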